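/- arXiv:0712.4213 — 4 statements merged into one kernel-verified Lean document; each statement's English description precedes it below -/
import Mathlib

section
/- Let k ≥ 2 be an even integer, ψ a real number, and t an integer, and let M = U_k(ψ,t). Then the state obtained by applying M to each qubit of the k-qubit cat state is inconsistent; equivalently, M_{0,0}^k + M_{0,1}^k = 0 and M_{1,0}^k + M_{1,1}^k = 0, so the amplitude a(y) = (1/√2)(∏_{i=1}^k M_{y_i,0} + ∏_{i=1}^k M_{y_i,1}) vanishes whenever y ∈ {0,1}^k is a constant string. -/
open Matrix

/-- The 2×2 complex matrix `U_k(ψ,t)` from the paper: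
`(1/√2)·[[e^{iψ}, e^{i(ψ−((2t+1)/k)π)}], [−e^{−i(ψ−((2t+1)/k)π)}, e^{−iψ}]]`. -/
noncomputable def Umat (k : ℤ) (ψ : ℝ) (t : ℤ) : Matrix (Fin 2) (Fin 2) ℂ :=
  (1 / (Real.sqrt 2 : ℂ)) •
    !![Complex.exp (Complex.I * (ψ : ℂ)),
        Complex.exp (Complex.I * ((ψ : ℂ) - ((2 * t + 1 : ℤ) : ℂ) / (k : ℂ) * (Real.pi : ℂ)));
      -Complex.exp (-(Complex.I * ((ψ : ℂ) - ((2 * t + 1 : ℤ) : ℂ) / (k : ℂ) * (Real.pi : ℂ)))),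
        Complex.exp (-(Complex.I * (ψ : ℂ)))]

/-!
With `θ = (2t+1)π/k` we have `e^{ikθ} = -1`. In each row of `U_k(ψ,t)` one entry is the other
times `e^{∓iθ}` (up to a sign that disappears in the `k`-th power because `k` is even), so the
`k`-th powers of the two entries of a row cancel. On a constant string both products of the
amplitude are exactly these `k`-th powers.
-/

open Complex

theorem add_mul_pow_eq_zero_of_pow_eq_neg_one {R : Type*} [CommRing R] {w : R} {n : ℕ}
    (hw : w ^ n = -1) (a : R) : a ^ n + (a * w) ^ n = 0 := by
  rw [mul_pow, hw]; ring

theorem exp_I_mul_odd_mul_pi_div_pow_self {n : ℕ} (hn : n ≠ 0) (t : ℤ) :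
    cexp (I * (((2 * t + 1 : ℤ) : ℂ) / (n : ℂ) * Real.pi)) ^ n = -1 := by
  have hn' : (n : ℂ) ≠ 0 := Nat.cast_ne_zero.mpr hn
  rw [← exp_nat_mul, show (n : ℂ) * (I * (((2 * t + 1 : ℤ) : ℂ) / n * Real.pi)) =
      ((2 * t + 1 : ℤ) : ℂ) * (Real.pi * I) by field_simp, exp_int_mul, exp_pi_mul_I]
  exact Odd.neg_one_zpow ⟨t, rfl⟩

theorem Umat_row_pow_add_pow_eq_zero {k : ℕ} (hk : k ≠ 0) (hke : Even k) (ψ : ℝ) (t : ℤ) :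
    ∀ c, Umat k ψ t c 0 ^ k + Umat k ψ t c 1 ^ k = 0 := by
  set w := cexp (I * (((2 * t + 1 : ℤ) : ℂ) / (k : ℂ) * Real.pi)) with hw_def
  have hw : w ^ k = -1 := exp_I_mul_odd_mul_pi_div_pow_self hk t
  refine Fin.forall_fin_two.mpr ⟨?_, ?_⟩
  · have hentry : Umat k ψ t 0 1 = Umat k ψ t 0 0 * w⁻¹ := by
      simp [Umat, hw_def, mul_sub, exp_sub, div_eq_mul_inv, mul_assoc]
    rw [hentry]
    exact add_mul_pow_eq_zero_of_pow_eq_neg_one (by rw [inv_pow, hw, inv_neg_one]) _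
  · have hentry : Umat k ψ t 1 0 = -(Umat k ψ t 1 1 * w) := by
      simp [Umat, hw_def]
      rw [mul_assoc, ← exp_add]
      ring_nf
    rw [hentry, hke.neg_pow, add_comm]
    exact add_mul_pow_eq_zero_of_pow_eq_neg_one hw _

theorem prod_add_prod_eq_zero_of_const {R α : Type*} [CommSemiring R] {n : ℕ}
    (M : Matrix α (Fin 2) R) (hM : ∀ c, M c 0 ^ n + M c 1 ^ n = 0)
    (y : Fin n → α) (hy : ∃ c, ∀ i, y i = c) : ∏ i, M (y i) 0 + ∏ i, M (y i) 1 = 0 := by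
  obtain ⟨c, hc⟩ := hy
  simpa only [hc, Fin.prod_const] using hM c

/-- For an even integer `k ≥ 2`, a real `ψ`, and an integer `t`, applying `M = U_k(ψ,t)`
to each qubit of the `k`-qubit cat state yields an inconsistent state:
`M₀₀^k + M₀₁^k = 0` and `M₁₀^k + M₁₁^k = 0`, so the amplitude
`a(y) = (1/√2)(∏ᵢ M_{yᵢ,0} + ∏ᵢ M_{yᵢ,1})` vanishes on every constant string `y ∈ {0,1}^k`. -/
theorem Umat_cat_inconsistent (k : ℕ) (hk : 2 ≤ k) (hke : Even k) (ψ : ℝ) (t : ℤ) :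
    (∀ c : Fin 2, (Umat (k : ℤ) ψ t) c 0 ^ k + (Umat (k : ℤ) ψ t) c 1 ^ k = 0) ∧
      ∀ y : Fin k → Fin 2, (∃ c : Fin 2, ∀ i, y i = c) →
        (1 / (Real.sqrt 2 : ℂ)) *
            ((∏ i, (Umat (k : ℤ) ψ t) (y i) 0) + ∏ i, (Umat (k : ℤ) ψ t) (y i) 1) = 0 := by
  have hrow := Umat_row_pow_add_pow_eq_zero (by omega) hke ψ t
  refine ⟨hrow, fun y hy => ?_⟩
  rw [prod_add_prod_eq_zero_of_const _ hrow y hy, mul_zero]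
end

section
/- For every integer k ≥ 2 there exists a unitary 4×4 complex matrix V (a two-qubit local operation, depending on k) such that V_{c,0}^k + V_{c,2}^k = 0 for every c ∈ {0,1,2,3}; consequently, applying V at each of k sites to the 2k-qubit state (|00⟩^{⊗k}+|10⟩^{⊗k})/√2 (the k-qubit cat state on the first qubits together with a fresh |0⟩ ancilla at each site) yields an inconsistent state. -/
/-!
If `∑ c, p c * ω c = 0` with weights `p c ≥ 0` summing to one and `ω c ^ k = -1`, then the
vectors `(√(p c))_c` and `(ω c * √(p c))_c` are orthonormal, and any unitary having them as
columns `0` and `2` satisfies `V c 0 ^ k = -V c 2 ^ k`. Such a combination exists for every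
`k ≥ 2`: for even `k` use `±e^{iπ/k}` with equal weights, for odd `k` use `e^{±iπ/k}` and `-1`,
which works because `cos (π / k) ≥ 0`.
-/

open Matrix ComplexConjugate

section UnitaryCompletion

variable {𝕜 ι κ : Type*} [RCLike 𝕜] [Fintype ι] [DecidableEq ι]

theorem Orthonormal.exists_mem_unitaryGroup_col_eq {v : κ → EuclideanSpace 𝕜 ι}
    (hv : Orthonormal 𝕜 v) {e : κ → ι} (he : e.Injective) :
    ∃ U ∈ Matrix.unitaryGroup ι 𝕜, ∀ j i, U i (e j) = v j i := by
  set v' : ι → EuclideanSpace 𝕜 ι := Function.extend e v 0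
  have hv' : Orthonormal 𝕜 ((Set.range e).domRestrict v') := by
    convert hv.comp _ (Equiv.ofInjective e he).symm.injective
    ext ⟨_, j, rfl⟩ : 1
    simp [v', he.extend_apply]
  obtain ⟨b, hb⟩ := hv'.exists_orthonormalBasis_extension_of_card_eq (by simp)
  refine ⟨(EuclideanSpace.basisFun ι 𝕜).toBasis.toMatrix b,
    (EuclideanSpace.basisFun ι 𝕜).toMatrix_orthonormalBasis_mem_unitary b, fun j i => ?_⟩
  simp [Module.Basis.toMatrix_apply, hb (e j) ⟨j, rfl⟩, v', he.extend_apply]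

end UnitaryCompletion

section PhaseColumns

variable {ι κ : Type*} [Fintype ι]

theorem orthonormal_phase_mul_sqrt [DecidableEq κ] {p : ι → ℝ} (hp : 0 ≤ p) {φ : κ → ι → ℂ}
    (h : ∀ i j, ∑ c, (p c : ℂ) * (conj (φ i c) * φ j c) = if i = j then 1 else 0) :
    Orthonormal ℂ fun j => WithLp.toLp 2 fun c => φ j c * √(p c) := by
  rw [orthonormal_iff_ite]
  intro i j
  rw [← h i j, PiLp.inner_apply]
  refine Finset.sum_congr rfl fun c _ => ?_
  have hsqrt : ((√(p c) : ℝ) : ℂ) * (√(p c) : ℝ) = p c := by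
    exact_mod_cast Real.mul_self_sqrt (hp c)
  simp only [RCLike.inner_apply, map_mul, Complex.conj_ofReal]
  linear_combination (conj (φ i c) * φ j c) * hsqrt

theorem exists_mem_unitaryGroup_col_pow_add_pow_eq_zero [DecidableEq ι] {i₀ i₁ : ι}
    (hi : i₀ ≠ i₁) {k : ℕ} (hk : k ≠ 0) {p : ι → ℝ} {ω : ι → ℂ} (hp : 0 ≤ p)
    (hp_sum : ∑ c, p c = 1) (hω : ∀ c, ω c ^ k = -1) (hpω : ∑ c, (p c : ℂ) * ω c = 0) :
    ∃ U ∈ Matrix.unitaryGroup ι ℂ, ∀ c, U c i₀ ^ k + U c i₁ ^ k = 0 := by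
  have hω_norm (c : ι) : conj (ω c) * ω c = 1 := by
    have : ‖ω c‖ = 1 := by
      rw [← pow_left_inj₀ (norm_nonneg _) zero_le_one hk, ← norm_pow, hω, norm_neg, norm_one,
        one_pow]
    rw [Complex.conj_mul', this]; simp
  have hp_sum' : ∑ c, (p c : ℂ) = 1 := by exact_mod_cast hp_sum
  have horth : Orthonormal ℂ fun j => WithLp.toLp 2 fun c => ![fun _ => 1, ω] j c * √(p c) := by
    refine orthonormal_phase_mul_sqrt hp fun i j => ?_
    fin_cases i <;> fin_cases j
    · simpa using hp_sum'
    · simpa using hpω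
    · have hpω_conj : ∑ c, (p c : ℂ) * conj (ω c) = 0 := by
        simpa only [map_sum, map_mul, Complex.conj_ofReal, map_zero] using congrArg conj hpω
      simpa using hpω_conj
    · simpa [hω_norm] using hp_sum'
  obtain ⟨U, hU, hcol⟩ := horth.exists_mem_unitaryGroup_col_eq (injective_pair_iff_ne.mpr hi)
  refine ⟨U, hU, fun c => ?_⟩
  have h₀ := hcol 0 c
  have h₁ := hcol 1 c
  simp only [Matrix.cons_val_zero, Matrix.cons_val_one, one_mul] at h₀ h₁
  rw [h₀, h₁, mul_pow, hω]
  ring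

end PhaseColumns

section RootsOfNegOne

open Real

theorem Complex.exp_pi_div_mul_I_pow {k : ℕ} (hk : k ≠ 0) :
    Complex.exp (π / k * I) ^ k = -1 := by
  rw [← Complex.exp_nat_mul, ← Complex.exp_pi_mul_I]
  congr 1
  field_simp

theorem exists_weights_roots_neg_one_of_even {k : ℕ} (hk : k ≠ 0) (hk_even : Even k) :
    ∃ (p : Fin 4 → ℝ) (ω : Fin 4 → ℂ), 0 ≤ p ∧ ∑ c, p c = 1 ∧ (∀ c, ω c ^ k = -1) ∧
      ∑ c, (p c : ℂ) * ω c = 0 := by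
  set ζ := Complex.exp (π / k * Complex.I)
  have hζ : ζ ^ k = -1 := Complex.exp_pi_div_mul_I_pow hk
  refine ⟨fun _ => 1 / 4, ![ζ, -ζ, ζ, -ζ], fun _ => by norm_num, by norm_num, ?_, ?_⟩
  · intro c
    fin_cases c <;> simp [hk_even.neg_pow, hζ]
  · simp [Fin.sum_univ_four]

theorem exists_weights_roots_neg_one_of_odd {k : ℕ} (hk : 2 ≤ k) (hk_odd : Odd k) :
    ∃ (p : Fin 4 → ℝ) (ω : Fin 4 → ℂ), 0 ≤ p ∧ ∑ c, p c = 1 ∧ (∀ c, ω c ^ k = -1) ∧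
      ∑ c, (p c : ℂ) * ω c = 0 := by
  set ζ := Complex.exp (π / k * Complex.I)
  have hζ : ζ ^ k = -1 := Complex.exp_pi_div_mul_I_pow (by omega)
  set γ := cos (π / k)
  have hγ : 0 ≤ γ := by
    refine cos_nonneg_of_neg_pi_div_two_le_of_le ?_ ?_
    · linarith [pi_pos, show 0 ≤ π / k by positivity]
    · exact div_le_div_of_nonneg_left pi_pos.le two_pos (by exact_mod_cast hk)
  have hζ_add : ζ + conj ζ = 2 * γ := by
    have hζ_re : ζ.re = γ := by
      rw [show ζ = Complex.exp ((π / k : ℝ) * Complex.I) by push_cast; rfl,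
        Complex.exp_ofReal_mul_I_re]
    rw [Complex.add_conj, hζ_re]
    push_cast
    rfl
  set a := 1 / (2 + 2 * γ)
  have ha : a * (2 + 2 * γ) = 1 := one_div_mul_cancel (by positivity)
  have ha_nonneg : 0 ≤ a := by positivity
  have ha_le : 2 * a ≤ 1 := by nlinarith
  refine ⟨![a, a, 1 - 2 * a, 0], ![ζ, conj ζ, -1, -1], ?_, ?_, ?_, ?_⟩
  · intro c
    fin_cases c <;> simp [ha_nonneg, ha_le]
  · simp [Fin.sum_univ_four]
    ring
  · intro c
    fin_cases c <;> simp [← map_pow, hζ, hk_odd.neg_one_pow]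
  · have haC : (a : ℂ) * (2 + 2 * γ) = 1 := by exact_mod_cast ha
    simp [Fin.sum_univ_four]
    linear_combination (a : ℂ) * hζ_add + haC

theorem exists_weights_roots_neg_one {k : ℕ} (hk : 2 ≤ k) :
    ∃ (p : Fin 4 → ℝ) (ω : Fin 4 → ℂ), 0 ≤ p ∧ ∑ c, p c = 1 ∧ (∀ c, ω c ^ k = -1) ∧
      ∑ c, (p c : ℂ) * ω c = 0 := by
  rcases Nat.even_or_odd k with hk_even | hk_odd
  · exact exists_weights_roots_neg_one_of_even (by omega) hk_even
  · exact exists_weights_roots_neg_one_of_odd hk hk_odd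

end RootsOfNegOne

theorem prod_add_prod_eq_zero_of_forall_eq {R ι : Type*} [CommSemiring R] {k : ℕ}
    {f g : ι → R} (hfg : ∀ c, f c ^ k + g c ^ k = 0) {y : Fin k → ι} {c : ι}
    (hy : ∀ i, y i = c) : ∏ i, f (y i) + ∏ i, g (y i) = 0 := by
  simp [hy, hfg]

/-- For every integer `k ≥ 2` there exists a unitary 4×4 complex matrix `V` (a two-qubit
local operation, depending on `k`, with rows/columns indexed by two-bit strings
`00,01,10,11` encoded as `0,1,2,3`) such that `V_{c,00}^k + V_{c,10}^k = 0` for every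
two-bit string `c`; consequently, applying `V` at each of `k` sites to the `2k`-qubit state
`(|00⟩^{⊗k}+|10⟩^{⊗k})/√2` yields an inconsistent state, i.e., the amplitude
`(1/√2)(∏ᵢ V_{yᵢ,00} + ∏ᵢ V_{yᵢ,10})` vanishes on every constant string `y`. -/
theorem exists_local_unitary_breaking_cat (k : ℕ) (hk : 2 ≤ k) :
    ∃ V : Matrix (Fin 4) (Fin 4) ℂ,
      (V * Vᴴ = 1 ∧ Vᴴ * V = 1) ∧
      (∀ c : Fin 4, V c 0 ^ k + V c 2 ^ k = 0) ∧
      ∀ y : Fin k → Fin 4, (∃ c : Fin 4, ∀ i, y i = c) →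
        (1 / (Real.sqrt 2 : ℂ)) * ((∏ i, V (y i) 0) + ∏ i, V (y i) 2) = 0 := by
  obtain ⟨p, ω, hp, hp_sum, hω, hpω⟩ := exists_weights_roots_neg_one hk
  obtain ⟨V, hV, hV_pow⟩ := exists_mem_unitaryGroup_col_pow_add_pow_eq_zero
    (i₀ := 0) (i₁ := 2) (by decide) (by omega) hp hp_sum hω hpω
  refine ⟨V, ⟨hV.2, hV.1⟩, hV_pow, ?_⟩
  rintro y ⟨c, hc⟩
  rw [prod_add_prod_eq_zero_of_forall_eq hV_pow hc, mul_zero]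
end

section
/- Let n ≥ 1, let S be a nonempty subset of {1,…,n} with |S| = k, and let x ∈ {0,1}^n be constant on S. Consider the n-qubit state Ψ = (|x⟩+|x̄⟩)/√2, whose amplitude on w ∈ {0,1}^n is (1/√2)([w = x] + [w = x̄]). For an outcome assignment r : ({1,…,n}\S) → {+,−}, define the unnormalized post-measurement state φ_r on the qubits in S by φ_r(w) = ∑_{z ∈ {0,1}^{S^c}} Ψ(w ⊔ z) · ∏_{j∉S} h(r_j, z_j), where w ⊔ z denotes the n-bit string agreeing with w on S and with z on the complement, and h(+,0) = h(+,1) = h(−,0) = 1/√2, h(−,1) = −1/√2. Let p = |{ j ∉ S : r_j = − }|. Then there is a nonzero complex scalar c (with |c| = (1/√2)^{n−k+1}) such that φ_r(w) = c·([w = 0^S] + (−1)^p·[w = 1^S]); that is, after all parties outside S measure their qubits in the Hadamard basis, the k parties in S share (|0⟩^{⊗k}+|1⟩^{⊗k})/√2 if p is even and (|0⟩^{⊗k}−|1⟩^{⊗k})/√2 if p is odd, up to global phase. -/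
/-!
Gluing `w` on `S` with `z` off `S` gives `x` or `x̄` only for `w = x|_S, z = x|_{Sᶜ}` or
`w = x̄|_S, z = x̄|_{Sᶜ}`, so the sum over `z` collapses to these two terms. The Hadamard factor
at `z` is `(1/√2)^{n-k}` times `(-1)` to the number of `j ∉ S` with `r_j = −` and `z_j = 1`;
for `z = x` and `z = x̄` these two counts add up to `p`, so the two signs differ by `(-1)^p`.
As `x` is constant on `S`, `x|_S` and `x̄|_S` are `0^S` and `1^S` in some order.
-/

open Finset

theorem prod_ite_neg_eq {ι R : Type*} [CommMonoid R] [HasDistribNeg R] (s : Finset ι)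
    (q : ι → Prop) [DecidablePred q] (a : R) :
    ∏ j ∈ s, (if q j then -a else a) = (-1) ^ #{j ∈ s | q j} * a ^ #s := by
  rw [prod_ite, prod_const, prod_const, neg_pow, mul_assoc, ← pow_add,
    card_filter_add_card_filter_not]

theorem neg_one_pow_eq_mul_of_add_eq {R : Type*} [Monoid R] [HasDistribNeg R] {a b p : ℕ}
    (h : a + b = p) : (-1 : R) ^ b = (-1) ^ a * (-1) ^ p := by
  rw [← h, pow_add, ← mul_assoc, ← pow_add, ← two_mul, pow_mul, neg_one_sq, one_pow,
    one_mul]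

theorem card_filter_and_add_card_filter_and_not {α : Type*} (s : Finset α) (r x : α → Bool) :
    #{j ∈ s | r j && x j} + #{j ∈ s | r j && !x j} = #{j ∈ s | r j} := by
  rw [← card_filter_add_card_filter_not (s := {j ∈ s | r j}) (fun j => x j), filter_filter,
    filter_filter]
  simp only [Bool.and_eq_true, Bool.not_eq_true', Bool.not_eq_true]

theorem norm_one_div_sqrt_two_pow_mul_neg_one_pow (m a : ℕ) :
    ‖(1 / (Real.sqrt 2 : ℂ)) ^ m * (-1) ^ a‖ = (1 / Real.sqrt 2) ^ m := by
  simp [abs_of_nonneg (Real.sqrt_nonneg 2)]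

section Glue

variable {ι β : Type*} {p : ι → Prop} [DecidablePred p]

theorem dite_subtype_eq_iff (w : {i // p i} → β) (z : {i // ¬p i} → β) (y : ι → β) :
    (fun i => if h : p i then w ⟨i, h⟩ else z ⟨i, h⟩) = y ↔
      w = (fun i => y i.1) ∧ z = fun i => y i.1 :=
  ((Equiv.piEquivPiSubtypeProd p fun _ => β).symm_apply_eq (x := (w, z))).trans Prod.ext_iff

open Classical in
theorem sum_ite_dite_subtype_eq_mul {R : Type*} [Semiring R] [Fintype {i // ¬p i}]
    [DecidableEq {i // ¬p i}] [Fintype β] [DecidableEq β] [DecidableEq (ι → β)]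
    (w : {i // p i} → β) (y : ι → β) (f : ({i // ¬p i} → β) → R) :
    ∑ z, (if (fun i => if h : p i then w ⟨i, h⟩ else z ⟨i, h⟩) = y then 1 else 0) * f z =
      if w = (fun i => y i.1) then f fun i => y i.1 else 0 := by
  simp_rw [dite_subtype_eq_iff, ite_and, ite_mul, one_mul, zero_mul]
  split_ifs <;> simp

end Glue

theorem sum_cat_amplitude_mul_prod_hadamard {ι : Type*} [Fintype ι] [DecidableEq ι]
    (S : Finset ι) (x : ι → Bool) (r : {j // j ∉ S} → Bool) (w : {i // i ∈ S} → Bool) :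
    ∑ z : {j // j ∉ S} → Bool,
        ((1 / (Real.sqrt 2 : ℂ)) *
            ((if (fun i => if h : i ∈ S then w ⟨i, h⟩ else z ⟨i, h⟩) = x then 1 else 0) +
              (if (fun i => if h : i ∈ S then w ⟨i, h⟩ else z ⟨i, h⟩) = fun i => !(x i)
                then 1 else 0))) *
          ∏ j, (((if r j && z j then -(1 / Real.sqrt 2) else 1 / Real.sqrt 2 : ℝ)) : ℂ) =
      (1 / (Real.sqrt 2 : ℂ)) ^ (Fintype.card {j // j ∉ S} + 1) *
        ((-1) ^ #{j | r j && x j} * (if w = (fun i => x i.1) then 1 else 0) +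
          (-1) ^ #{j | r j && !x j} * (if w = (fun i => !x i.1) then 1 else 0)) := by
  simp_rw [apply_ite ((↑) : ℝ → ℂ), Complex.ofReal_neg, Complex.ofReal_div,
    Complex.ofReal_one, mul_assoc, add_mul, ← mul_sum, sum_add_distrib,
    sum_ite_dite_subtype_eq_mul, prod_ite_neg_eq, card_univ]
  split_ifs <;> ring

theorem hadamard_measurement_cat_general (n : ℕ) (S : Finset (Fin n))
    (hS : S.Nonempty) (k : ℕ) (hk : S.card = k) (x : Fin n → Bool)
    (hx : ∀ i ∈ S, ∀ j ∈ S, x i = x j)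
    (r : {j : Fin n // j ∉ S} → Bool) (p : ℕ)
    (hp : p = (Finset.univ.filter fun j : {j : Fin n // j ∉ S} => r j = true).card) :
    ∃ c : ℂ, c ≠ 0 ∧ ‖c‖ = (1 / Real.sqrt 2) ^ (n - k + 1) ∧
      ∀ w : {i : Fin n // i ∈ S} → Bool,
        (∑ z : {j : Fin n // j ∉ S} → Bool,
            ((1 / (Real.sqrt 2 : ℂ)) *
                ((if (fun i : Fin n => if h : i ∈ S then w ⟨i, h⟩ else z ⟨i, h⟩) = x
                    then 1 else 0) +
                  (if (fun i : Fin n => if h : i ∈ S then w ⟨i, h⟩ else z ⟨i, h⟩) =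
                      fun i => !(x i) then 1 else 0))) *
              ∏ j : {j : Fin n // j ∉ S},
                (((if r j && z j then -(1 / Real.sqrt 2) else 1 / Real.sqrt 2 : ℝ)) : ℂ)) =
          c * ((if ∀ i, w i = false then 1 else 0) +
                (-1 : ℂ) ^ p * (if ∀ i, w i = true then 1 else 0)) := by
  obtain ⟨i₀, hi₀⟩ := hS
  have hcard : Fintype.card {j // j ∉ S} = n - k := by
    rw [Fintype.card_subtype_compl, Fintype.card_coe, Fintype.card_fin, hk]
  have hparity := card_filter_and_add_card_filter_and_not univ r fun j => x j
  rw [← hp] at hparity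
  have hxS : (fun i : {i // i ∈ S} => x i) = fun _ => x i₀ :=
    funext fun i => hx i i.2 i₀ hi₀
  have hnxS : (fun i : {i // i ∈ S} => !x i) = fun _ => !x i₀ :=
    funext fun i => by rw [hx i i.2 i₀ hi₀]
  refine ⟨(1 / (Real.sqrt 2 : ℂ)) ^ (n - k + 1) *
      (-1) ^ (if x i₀ then #{j | r j && !x j} else #{j | r j && x j}),
    mul_ne_zero (by simp) (pow_ne_zero _ (by norm_num)),
    norm_one_div_sqrt_two_pow_mul_neg_one_pow _ _, fun w => ?_⟩
  have hind (b : Bool) :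
      (if w = (fun _ => b) then (1 : ℂ) else 0) = if ∀ i, w i = b then 1 else 0 := by
    simp only [funext_iff]
  rw [sum_cat_amplitude_mul_prod_hadamard, hcard, hxS, hnxS]
  cases x i₀
  · simp only [hind, Bool.not_false, Bool.false_eq_true, if_false]
    rw [neg_one_pow_eq_mul_of_add_eq hparity]
    ring
  · simp only [hind, Bool.not_true, if_true]
    rw [neg_one_pow_eq_mul_of_add_eq ((add_comm _ _).trans hparity)]
    ring

/-- Hadamard measurement of all qubits outside `S` on the cat-like state
`(|x⟩+|x̄⟩)/√2` (with `x` constant on `S`) leaves the parties in `S` sharing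
`(|0⟩^{⊗k}+|1⟩^{⊗k})/√2` or `(|0⟩^{⊗k}−|1⟩^{⊗k})/√2` up to a global phase,
according to the parity `p` of the number of `−` outcomes. -/
theorem hadamard_measurement_cat (n : ℕ) (hn : 1 ≤ n) (S : Finset (Fin n))
    (hS : S.Nonempty) (k : ℕ) (hk : S.card = k) (x : Fin n → Bool)
    (hx : ∀ i ∈ S, ∀ j ∈ S, x i = x j)
    (r : {j : Fin n // j ∉ S} → Bool) (p : ℕ)
    (hp : p = (Finset.univ.filter fun j : {j : Fin n // j ∉ S} => r j = true).card) :
    ∃ c : ℂ, c ≠ 0 ∧ ‖c‖ = (1 / Real.sqrt 2) ^ (n - k + 1) ∧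
      ∀ w : {i : Fin n // i ∈ S} → Bool,
        (∑ z : {j : Fin n // j ∉ S} → Bool,
            ((1 / (Real.sqrt 2 : ℂ)) *
                ((if (fun i : Fin n => if h : i ∈ S then w ⟨i, h⟩ else z ⟨i, h⟩) = x
                    then 1 else 0) +
                  (if (fun i : Fin n => if h : i ∈ S then w ⟨i, h⟩ else z ⟨i, h⟩) =
                      fun i => !(x i) then 1 else 0))) *
              ∏ j : {j : Fin n // j ∉ S},
                (((if r j && z j then -(1 / Real.sqrt 2) else 1 / Real.sqrt 2 : ℝ)) : ℂ)) =
          c * ((if ∀ i, w i = false then 1 else 0) +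
                (-1 : ℂ) ^ p * (if ∀ i, w i = true then 1 else 0)) :=
  hadamard_measurement_cat_general n S hS k hk x hx r p hp
end

section
/- Let A be a finite set with |A| = n ≥ 1, and let (r_k)_{k ≥ 0} be a sequence of equivalence relations on A such that (i) for every k, r_{k+1} refines r_k (i.e., whenever x and y are r_{k+1}-equivalent they are r_k-equivalent), and (ii) for every k ≥ 1, if r_{k−1} = r_k then r_k = r_{k+1}. Then r_j = r_{n−1} for every j ≥ n−1. (Consequently, in the setting of views of an n-party anonymous network — where r_k is the relation 'the depth-k views of the two parties are isomorphic' — two parties have isomorphic views of infinite depth if and only if their views of depth n−1 are isomorphic, which is Norris's theorem.) -/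
/-!
Refining an equivalence relation properly strictly increases its number of classes, which lies
between `1` and `n`. So among `r 0, …, r n` two consecutive relations coincide, at some index
`k ≤ n - 1`, and from the first such repetition on the sequence is constant.
-/

namespace Setoid

variable {α : Type*}

theorem map_of_le_surjective {r s : Setoid α} (h : s ≤ r) : Function.Surjective (map_of_le h) :=
  Quotient.ind fun a => ⟨Quotient.mk s a, rfl⟩

theorem card_quotient_le_of_le [Finite α] {r s : Setoid α} (h : s ≤ r) :
    Nat.card (Quotient r) ≤ Nat.card (Quotient s) :=
  Nat.card_le_card_of_surjective _ (map_of_le_surjective h)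

theorem card_quotient_lt_of_lt [Finite α] {r s : Setoid α} (h : s < r) :
    Nat.card (Quotient r) < Nat.card (Quotient s) := by
  refine (card_quotient_le_of_le h.le).lt_of_ne fun hcard => h.not_ge ?_
  have hinj : Function.Injective (map_of_le h.le) :=
    ((Nat.bijective_iff_surjective_and_card _).2 ⟨map_of_le_surjective h.le, hcard.symm⟩).1
  exact fun x y hxy => Quotient.exact (hinj (Quotient.sound hxy))

theorem card_quotient_add_le_of_ne_succ [Finite α] {r : ℕ → Setoid α}
    (hr : ∀ k, r (k + 1) ≤ r k) {m : ℕ} (hne : ∀ k < m, r k ≠ r (k + 1)) :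
    Nat.card (Quotient (r 0)) + m ≤ Nat.card (Quotient (r m)) := by
  induction m with
  | zero => rfl
  | succ m ih =>
    have hlt := card_quotient_lt_of_lt ((hr m).lt_of_ne (hne m m.lt_succ_self).symm)
    have := ih fun k hk => hne k (hk.trans m.lt_succ_self)
    omega

theorem exists_lt_card_eq_succ [Finite α] [Nonempty α] {r : ℕ → Setoid α}
    (hr : ∀ k, r (k + 1) ≤ r k) : ∃ k < Nat.card α, r k = r (k + 1) := by
  by_contra! hne
  have hchain := card_quotient_add_le_of_ne_succ hr hne
  have : Nonempty (Quotient (r 0)) := .map (Quotient.mk _) ‹_›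
  have hpos : 0 < Nat.card (Quotient (r 0)) := Nat.card_pos
  have hle : Nat.card (Quotient (r (Nat.card α))) ≤ Nat.card α :=
    Nat.card_le_card_of_surjective _ Quotient.mk_surjective
  omega

end Setoid

section StableSequence

variable {β : Type*} {r : ℕ → β}

theorem apply_eq_apply_succ_of_le (hstep : ∀ k, r k = r (k + 1) → r (k + 1) = r (k + 2))
    {k₀ : ℕ} (h₀ : r k₀ = r (k₀ + 1)) {j : ℕ} (hj : k₀ ≤ j) : r j = r (j + 1) := by
  induction j, hj using Nat.le_induction with
  | base => exact h₀
  | succ j _ ih => exact hstep j ih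

theorem apply_eq_of_le_of_stable (hstep : ∀ k, r k = r (k + 1) → r (k + 1) = r (k + 2))
    {k₀ : ℕ} (h₀ : r k₀ = r (k₀ + 1)) {j : ℕ} (hj : k₀ ≤ j) : r j = r k₀ := by
  induction j, hj using Nat.le_induction with
  | base => rfl
  | succ j hj ih => exact (apply_eq_apply_succ_of_le hstep h₀ hj).symm.trans ih

end StableSequence

/-- Let `A` be a finite set with `|A| = n ≥ 1` and let `(r_k)` be a sequence of equivalence
relations on `A` such that each `r_{k+1}` refines `r_k`, and such that `r_{k−1} = r_k`
(for `k ≥ 1`) implies `r_k = r_{k+1}`. Then `r_j = r_{n−1}` for every `j ≥ n − 1`.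
(This is the combinatorial core of Norris's theorem: two parties of an `n`-party anonymous
network have isomorphic views of infinite depth iff their views of depth `n − 1` are
isomorphic.) -/
theorem equiv_relation_sequence_stabilizes {A : Type*} [Fintype A]
    (n : ℕ) (hn : 1 ≤ n) (hcard : Fintype.card A = n)
    (r : ℕ → Setoid A)
    (hrefine : ∀ k : ℕ, ∀ x y : A, (r (k + 1)).r x y → (r k).r x y)
    (hstep : ∀ k : ℕ, 1 ≤ k → r (k - 1) = r k → r k = r (k + 1)) :
    ∀ j : ℕ, n - 1 ≤ j → r j = r (n - 1) := by
  have : Nonempty A := Fintype.card_pos_iff.mp (hcard ▸ hn)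
  rw [← Nat.card_eq_fintype_card] at hcard
  obtain ⟨k₀, hk₀, h₀⟩ := Setoid.exists_lt_card_eq_succ (r := r) fun k _ _ => hrefine k _ _
  have hstable : ∀ k, r k = r (k + 1) → r (k + 1) = r (k + 2) := fun k =>
    hstep (k + 1) (Nat.le_add_left 1 k)
  intro j hj
  rw [apply_eq_of_le_of_stable hstable h₀ (by omega : k₀ ≤ j),
    apply_eq_of_le_of_stable hstable h₀ (by omega : k₀ ≤ n - 1)]
end
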